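/- arXiv:1212.5302 — 2 statements merged into one kernel-verified Lean document; each statement's English description precedes it below -/
import Mathlib

section
/- Let (A1,B1,C1,D1) and (A2,B2,C2,D2) be Speh quadruples with A1 ≤ A2 and D2 ≤ D1. Then [(C2 < C1 or Finset.Icc (B1+1) (D1+1) ∩ Finset.Icc A2 B2 ≠ ∅) and (B2 < B1 or Finset.Icc (C1+1) (D1+1) ∩ Finset.Icc A2 C2 ≠ ∅)] holds if and only if [(C2 < C1 and B2 < B1) or (C1 < C2 and B1 < B2)]. -/
/-- A Speh quadruple: integers `A ≤ B`, `A ≤ C` with `A + D = B + C`. -/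
def SpehQuad (A B C D : ℤ) : Prop := A ≤ B ∧ A ≤ C ∧ A + D = B + C

/-- The integer segment (as a finite set) associated to a pair `(b, e)`. -/
noncomputable def segSet (s : ℤ × ℤ) : Finset ℤ := Finset.Icc s.1 s.2

/-- A finite set of integers is a ℤ-segment if it equals `Finset.Icc x y` for some `x ≤ y`. -/
def IsZSegment (S : Finset ℤ) : Prop := ∃ x y : ℤ, x ≤ y ∧ S = Finset.Icc x y

/-- The rectangular multisegment `m(A,B,C,D)`: the segments `[A+j, B+j]` for `j = 0, …, C−A`.
(Here `D = B + C − A` is determined by the other three entries.) -/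
def rectMulti (A B C : ℤ) : Multiset (ℤ × ℤ) :=
  (Multiset.range (C - A + 1).toNat).map fun j => (A + (j : ℤ), B + (j : ℤ))

/-- A multiset of pairs represents a multisegment when each pair `(b,e)` satisfies `b ≤ e`. -/
def ValidMS (a : Multiset (ℤ × ℤ)) : Prop := ∀ s ∈ a, s.1 ≤ s.2

/-- Total number of points of a multisegment (used as fuel for the MW algorithm). -/
def msSize (a : Multiset (ℤ × ℤ)) : ℕ := (a.map fun s => (s.2 + 1 - s.1).toNat).sum

/-- Removing the last element of a segment: `[b,e] ↦ [b,e−1]`, omitted if empty. -/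
def truncate (s : ℤ × ℤ) : Multiset (ℤ × ℤ) :=
  if s.1 ≤ s.2 - 1 then {(s.1, s.2 - 1)} else 0

/-- Maximum of a multiset of integers (default `0` on the empty multiset). -/
def msMaxD (m : Multiset ℤ) : ℤ := m.toFinset.max.unbotD 0

/-- The chain of stages of one step of the Mœglin–Waldspurger algorithm.
`chainAux fuel rem b e` looks in `rem` for a segment with end `e` and beginning `< b`,
of maximal beginning; if found, it is removed, its truncation is recorded, and the chain
continues with end `e − 1`.  Returns the number of segments chosen together with the
resulting multisegment (remaining segments plus truncations of chosen ones). -/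
def chainAux : ℕ → Multiset (ℤ × ℤ) → ℤ → ℤ → ℕ × Multiset (ℤ × ℤ)
  | 0, rem, _, _ => (0, rem)
  | n + 1, rem, b, e =>
    let S := rem.filter fun s => s.2 = e ∧ s.1 < b
    if S = 0 then (0, rem)
    else
      let b' := msMaxD (S.map Prod.fst)
      let r := chainAux n (rem.erase (b', e)) b' (e - 1)
      (r.1 + 1, truncate (b', e) + r.2)

/-- One step of the Mœglin–Waldspurger algorithm on a (nonempty) multisegment:
returns the segment `Γ = [x−k+1, x]` and the multisegment `a′`. -/
def mwaStep (a : Multiset (ℤ × ℤ)) : (ℤ × ℤ) × Multiset (ℤ × ℤ) :=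
  let x := msMaxD (a.map Prod.snd)
  let b1 := msMaxD ((a.filter fun s => s.2 = x).map Prod.fst)
  let r := chainAux a.card (a.erase (b1, x)) b1 (x - 1)
  ((x - r.1, x), truncate (b1, x) + r.2)

/-- The Mœglin–Waldspurger algorithm, with fuel. -/
def mwaAux : ℕ → Multiset (ℤ × ℤ) → Multiset (ℤ × ℤ)
  | 0, _ => 0
  | n + 1, a =>
    if a = 0 then 0
    else
      let r := mwaStep a
      r.1 ::ₘ mwaAux n r.2

/-- The Mœglin–Waldspurger algorithm, computing the Zelevinsky dual of a multisegment.
(The fuel `msSize a` suffices: each step strictly decreases the total number of points.) -/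
def MWA (a : Multiset (ℤ × ℤ)) : Multiset (ℤ × ℤ) := mwaAux (msSize a) a

/-- Two segments are linked if their union is a ℤ-segment different from both of them. -/
def Linked (s t : ℤ × ℤ) : Prop :=
  IsZSegment (segSet s ∪ segSet t) ∧ segSet s ∪ segSet t ≠ segSet s ∧
    segSet s ∪ segSet t ≠ segSet t

/-- The intersection of two linked segments, as a multisegment (empty if disjoint). -/
def segInterM (s t : ℤ × ℤ) : Multiset (ℤ × ℤ) :=
  if max s.1 t.1 ≤ min s.2 t.2 then {(max s.1 t.1, min s.2 t.2)} else 0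

/-- Elementary linking operation: `Prec c b` holds when `b` contains linked segments
`s, t` and `c` is obtained from `b` by replacing them with `s ∪ t` (and `s ∩ t` if nonempty). -/
def Prec (c b : Multiset (ℤ × ℤ)) : Prop :=
  ∃ s t rest, b = s ::ₘ t ::ₘ rest ∧ Linked s t ∧
    c = (min s.1 t.1, max s.2 t.2) ::ₘ (segInterM s t + rest)

/-- The linking (strict) order on multisegments. -/
def MLt : Multiset (ℤ × ℤ) → Multiset (ℤ × ℤ) → Prop := Relation.TransGen Prec

/-- Strong ordering of Speh quadruples. -/
def StrongLt (A1 B1 C1 D1 A2 B2 C2 D2 : ℤ) : Prop :=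
  A1 < A2 ∧ B1 < B2 ∧ C1 < C2 ∧ D1 < D2

/-- The set `I(A,B,C,D)` attached to a Speh quadruple. -/
def ISet (A B C D : ℤ) : Set ℤ := {z : ℤ | z ≤ A - 1} ∪ ↑(Finset.Icc (B + 1) (D + 1))

/-- Pattern: integers `i < j < k` with `i, k ∈ I \ J` and `j ∈ J \ I`. -/
def PPat (I J : Set ℤ) : Prop :=
  ∃ i j k : ℤ, i < j ∧ j < k ∧ i ∈ I \ J ∧ j ∈ J \ I ∧ k ∈ I \ J

/-- Reflection of a multisegment: `[b,e] ↦ [−e,−b]`. -/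
def reflMS (a : Multiset (ℤ × ℤ)) : Multiset (ℤ × ℤ) := a.map fun s => (-s.2, -s.1)

/-! Since `B2, C2 ≤ D2 ≤ D1`, the two interval conditions say exactly `B1 < B2` and `C1 < C2`;
what remains is propositional, the mixed cases `C2 < C1 < C2` and `B1 < B2 < B1` being absurd. -/

theorem SpehQuad.second_le_fourth {A B C D : ℤ} (h : SpehQuad A B C D) : B ≤ D := by
  obtain ⟨-, hAC, hsum⟩ := h
  omega

theorem SpehQuad.third_le_fourth {A B C D : ℤ} (h : SpehQuad A B C D) : C ≤ D := by
  obtain ⟨hAB, -, hsum⟩ := h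
  omega

open Finset in
theorem Icc_add_one_inter_Icc_ne_empty_iff {a b c d : ℤ} (hac : a ≤ c) (hcd : c ≤ d + 1) :
    Icc (b + 1) (d + 1) ∩ Icc a c ≠ ∅ ↔ b < c := by
  rw [← nonempty_iff_ne_empty]
  constructor
  · rintro ⟨x, hx⟩
    simp only [mem_inter, mem_Icc] at hx
    omega
  · intro hbc
    exact ⟨c, by simp only [mem_inter, mem_Icc]; omega⟩

theorem crossing_iff_strict_inequalities_general
    (B1 C1 D1 A2 B2 C2 D2 : ℤ)
    (h2 : SpehQuad A2 B2 C2 D2)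
    (hD : D2 ≤ D1) :
    ((C2 < C1 ∨ Finset.Icc (B1 + 1) (D1 + 1) ∩ Finset.Icc A2 B2 ≠ ∅) ∧
      (B2 < B1 ∨ Finset.Icc (C1 + 1) (D1 + 1) ∩ Finset.Icc A2 C2 ≠ ∅)) ↔
    ((C2 < C1 ∧ B2 < B1) ∨ (C1 < C2 ∧ B1 < B2)) := by
  have hB2 : B2 ≤ D1 + 1 := by linarith [h2.second_le_fourth]
  have hC2 : C2 ≤ D1 + 1 := by linarith [h2.third_le_fourth]
  rw [Icc_add_one_inter_Icc_ne_empty_iff h2.1 hB2, Icc_add_one_inter_Icc_ne_empty_iff h2.2.1 hC2]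
  omega

theorem crossing_iff_strict_inequalities
    (A1 B1 C1 D1 A2 B2 C2 D2 : ℤ)
    (h1 : SpehQuad A1 B1 C1 D1) (h2 : SpehQuad A2 B2 C2 D2)
    (hA : A1 ≤ A2) (hD : D2 ≤ D1) :
    ((C2 < C1 ∨ Finset.Icc (B1 + 1) (D1 + 1) ∩ Finset.Icc A2 B2 ≠ ∅) ∧
      (B2 < B1 ∨ Finset.Icc (C1 + 1) (D1 + 1) ∩ Finset.Icc A2 C2 ≠ ∅)) ↔
    ((C2 < C1 ∧ B2 < B1) ∨ (C1 < C2 ∧ B1 < B2)) :=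
  crossing_iff_strict_inequalities_general B1 C1 D1 A2 B2 C2 D2 h2 hD
end

section
/- Let (A1,B1,C1,D1) and (A2,B2,C2,D2) be Speh quadruples with C1 < C2 and A2 ≤ A1, and set I_i = I(A_i,B_i,C_i,D_i) for i = 1, 2. Then there do not exist integers i < j < k with i, k ∈ I2 \ I1 and j ∈ I1 \ I2. -/
/-! The part `{z ≤ A₂ - 1}` of `I₂` lies in `I₁` because `A₂ ≤ A₁`, so the outer points `i, k`
of a pattern both lie in the segment part of `I₂`; being convex, it then contains `j` as well. -/

theorem not_pPat_union_of_subset_of_ordConnected {L M J : Set ℤ} (hL : L ⊆ J)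
    (hM : M.OrdConnected) : ¬ PPat (L ∪ M) J := by
  rintro ⟨i, j, k, hij, hjk, ⟨hiI, hiJ⟩, ⟨-, hjI⟩, ⟨hkI, hkJ⟩⟩
  have hiM : i ∈ M := hiI.resolve_left fun hiL => hiJ (hL hiL)
  have hkM : k ∈ M := hkI.resolve_left fun hkL => hkJ (hL hkL)
  exact hjI (Or.inr (hM.out hiM hkM ⟨hij.le, hjk.le⟩))

theorem no_pattern_of_lt_C_general
    (A1 B1 C1 D1 A2 B2 C2 D2 : ℤ)
    (hA : A2 ≤ A1) :
    ¬ PPat (ISet A2 B2 C2 D2) (ISet A1 B1 C1 D1) := by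
  have hray : {z : ℤ | z ≤ A2 - 1} ⊆ ISet A1 B1 C1 D1 := fun z (hz : z ≤ A2 - 1) =>
    Or.inl (show z ≤ A1 - 1 by omega)
  have hseg : (↑(Finset.Icc (B2 + 1) (D2 + 1)) : Set ℤ).OrdConnected := by
    rw [Finset.coe_Icc]
    exact Set.ordConnected_Icc
  exact not_pPat_union_of_subset_of_ordConnected hray hseg

theorem no_pattern_of_lt_C
    (A1 B1 C1 D1 A2 B2 C2 D2 : ℤ)
    (h1 : SpehQuad A1 B1 C1 D1) (h2 : SpehQuad A2 B2 C2 D2)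
    (hC : C1 < C2) (hA : A2 ≤ A1) :
    ¬ PPat (ISet A2 B2 C2 D2) (ISet A1 B1 C1 D1) :=
  no_pattern_of_lt_C_general A1 B1 C1 D1 A2 B2 C2 D2 hA
end
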